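/- arXiv:1803.03954 — 9 statements merged into one kernel-verified Lean document; each statement's English description precedes it below -/
import Mathlib

section
/- Let A be an m × m real symmetric matrix with a_{ii} = 1 for all i and |a_{ij}| ≤ ε for all i ≠ j. Then the rank of A satisfies rk(A) ≥ (tr(A))² / tr(A²) ≥ m / (1 + (m-1)ε²). -/
open Finset in
lemma trace_eq_sum_eigs {m : ℕ} {A : Matrix (Fin m) (Fin m) ℝ} (hA : A.IsHermitian) :
    A.trace = ∑ i, hA.eigenvalues i := by
  conv_lhs => rw [hA.spectral_theorem, Unitary.conjStarAlgAut_apply]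
  rw [Matrix.trace_mul_cycle]
  rw [(Matrix.mem_unitaryGroup_iff'.mp hA.eigenvectorUnitary.2)]
  simp [Matrix.trace_diagonal, Function.comp]

open Finset in
lemma trace_sq_eq_sum_eigs_sq {m : ℕ} {A : Matrix (Fin m) (Fin m) ℝ} (hA : A.IsHermitian) :
    (A * A).trace = ∑ i, hA.eigenvalues i ^ 2 := by
  set U : Matrix (Fin m) (Fin m) ℝ := (hA.eigenvectorUnitary : Matrix (Fin m) (Fin m) ℝ)
  set D : Matrix (Fin m) (Fin m) ℝ := Matrix.diagonal (RCLike.ofReal ∘ hA.eigenvalues)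
  have h1 : star U * U = 1 := Matrix.mem_unitaryGroup_iff'.mp hA.eigenvectorUnitary.2
  have hAe : A = U * D * star U := hA.spectral_theorem
  have h2 : A * A = U * (D * D) * star U := by
    rw [hAe, show U * D * star U * (U * D * star U) = U * D * (star U * U) * (D * star U) by
      simp only [Matrix.mul_assoc], h1, mul_one]
    simp only [Matrix.mul_assoc]
  rw [h2, Matrix.trace_mul_cycle, ← Matrix.mul_assoc, h1, one_mul]
  simp [D, Matrix.diagonal_mul_diagonal, Matrix.trace_diagonal, Function.comp, sq]

theorem rank_lower_bound_perturbed_identity {m : ℕ} (A : Matrix (Fin m) (Fin m) ℝ)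
    (hsymm : A.IsSymm) (ε : ℝ) (hε : 0 ≤ ε)
    (hdiag : ∀ i, A i i = 1)
    (hoff : ∀ i j, i ≠ j → |A i j| ≤ ε) :
    (A.rank : ℝ) ≥ A.trace ^ 2 / (A * A).trace ∧
      A.trace ^ 2 / (A * A).trace ≥ (m : ℝ) / (1 + ((m : ℝ) - 1) * ε ^ 2) := by
  classical
  have hA : A.IsHermitian := by
    ext i j
    simp [Matrix.conjTranspose_apply, hsymm.apply]
  rcases Nat.eq_zero_or_pos m with hm | hm
  · subst hm
    have h0 : A.trace = 0 := by simp [Matrix.trace]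
    constructor
    · rw [h0]; simp
    · rw [h0]; simp
  -- trace identities
  have htr : A.trace = (m : ℝ) := by
    simp [Matrix.trace, Matrix.diag, hdiag]
  have htrAA : (A * A).trace = ∑ i, ∑ j, (A i j) ^ 2 := by
    simp only [Matrix.trace, Matrix.diag, Matrix.mul_apply]
    congr 1; ext i; congr 1; ext j
    rw [hsymm.apply, sq]
  -- lower bound on trace (A*A)
  have hlow : (m : ℝ) ≤ (A * A).trace := by
    rw [htrAA]
    calc (m : ℝ) = ∑ i : Fin m, (1:ℝ) := by simp
    _ ≤ ∑ i, ∑ j, (A i j) ^ 2 := by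
        apply Finset.sum_le_sum
        intro i _
        have h1 : (A i i) ^ 2 = 1 := by rw [hdiag]; norm_num
        calc (1:ℝ) = (A i i) ^ 2 := h1.symm
        _ ≤ ∑ j, (A i j) ^ 2 :=
            Finset.single_le_sum (f := fun j => (A i j) ^ 2) (fun j _ => sq_nonneg _)
              (Finset.mem_univ i)
  have hTpos : (0:ℝ) < (A * A).trace :=
    lt_of_lt_of_le (by exact_mod_cast hm) hlow
  -- upper bound on trace (A*A)
  have hup : (A * A).trace ≤ (m : ℝ) * (1 + ((m : ℝ) - 1) * ε ^ 2) := by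
    rw [htrAA]
    calc ∑ i, ∑ j, (A i j) ^ 2 ≤ ∑ i : Fin m, (1 + ((m : ℝ) - 1) * ε ^ 2) := by
          apply Finset.sum_le_sum
          intro i _
          rw [← Finset.add_sum_erase _ _ (Finset.mem_univ i), hdiag, one_pow]
          gcongr 1 + ?_
          calc ∑ j ∈ Finset.univ.erase i, (A i j) ^ 2
              ≤ ∑ j ∈ Finset.univ.erase i, ε ^ 2 := by
                apply Finset.sum_le_sum
                intro j hj
                have := hoff i j (Ne.symm (Finset.ne_of_mem_erase hj))
                calc (A i j) ^ 2 = |A i j| ^ 2 := (sq_abs _).symm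
                _ ≤ ε ^ 2 := by gcongr
            _ = ((m : ℝ) - 1) * ε ^ 2 := by
                rw [Finset.sum_const, Finset.card_erase_of_mem (Finset.mem_univ i)]
                simp [Nat.cast_sub hm]
      _ = (m : ℝ) * (1 + ((m : ℝ) - 1) * ε ^ 2) := by
          rw [Finset.sum_const, Finset.card_univ, Fintype.card_fin, nsmul_eq_mul]
  constructor
  · -- Cauchy-Schwarz part
    rw [ge_iff_le, div_le_iff₀ hTpos]
    rw [trace_eq_sum_eigs hA, trace_sq_eq_sum_eigs_sq hA]
    set s : Finset (Fin m) := Finset.univ.filter (fun i => hA.eigenvalues i ≠ 0) with hs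
    have hrank : (A.rank : ℝ) = (s.card : ℝ) := by
      rw [hA.rank_eq_card_non_zero_eigs, Fintype.card_subtype]
    have hsum : ∑ i, hA.eigenvalues i = ∑ i ∈ s, hA.eigenvalues i := by
      rw [hs, Finset.sum_filter_ne_zero]
    rw [hsum, hrank]
    calc (∑ i ∈ s, hA.eigenvalues i) ^ 2
        ≤ (s.card : ℝ) * ∑ i ∈ s, hA.eigenvalues i ^ 2 := sq_sum_le_card_mul_sum_sq
      _ ≤ (s.card : ℝ) * ∑ i, hA.eigenvalues i ^ 2 := by
          exact mul_le_mul_of_nonneg_left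
            (Finset.sum_le_sum_of_subset_of_nonneg (Finset.subset_univ s)
              (fun i _ _ => sq_nonneg (hA.eigenvalues i))) (Nat.cast_nonneg _)
  · -- second inequality
    have hden : (0:ℝ) < 1 + ((m : ℝ) - 1) * ε ^ 2 := by
      have h1 : (1:ℝ) ≤ (m : ℝ) := by exact_mod_cast hm
      nlinarith [sq_nonneg ε]
    rw [ge_iff_le, div_le_div_iff₀ hden hTpos, htr]
    calc (m : ℝ) * (A * A).trace ≤ (m : ℝ) * ((m : ℝ) * (1 + ((m : ℝ) - 1) * ε ^ 2)) := by
          gcongr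
      _ = (m : ℝ) ^ 2 * (1 + ((m : ℝ) - 1) * ε ^ 2) := by ring
end

section
/- Let n be a positive integer, L = {a₁/b₁, ..., a_s/b_s} with each a_i/b_i ∈ [0,1) an irreducible fraction, and let a/b = max of these fractions. Let F be a fractional L-intersecting family of subsets of [n] such that every A ∈ F satisfies |A| > αn, where α = max(1/2, (4a - b)/(2b)). Then |F| ≤ n. -/
open Finset

private def chiq {n : ℕ} (A : Finset (Fin n)) : Fin n → ℚ :=
  fun i => (if i ∈ A then 1 else 0) - 1/2

private lemma sum_ind {n : ℕ} (S : Finset (Fin n)) :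
    ∑ i, (if i ∈ S then (1:ℚ) else 0) = S.card := by
  simp [Finset.sum_ite_mem]

private lemma sum_chiq {n : ℕ} (A : Finset (Fin n)) :
    ∑ i, chiq A i = (A.card : ℚ) - n / 2 := by
  simp [chiq, Finset.sum_sub_distrib, Finset.sum_ite_mem]
  ring

private lemma dot_chiq {n : ℕ} (A B : Finset (Fin n)) :
    ∑ i, chiq A i * chiq B i
      = ((A ∩ B).card : ℚ) - A.card / 2 - B.card / 2 + n / 4 := by
  have h1 : ∀ i, chiq A i * chiq B i
      = (if i ∈ A ∩ B then (1:ℚ) else 0) - (if i ∈ A then (1:ℚ) else 0) / 2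
        - (if i ∈ B then (1:ℚ) else 0) / 2 + 1 / 4 := by
    intro i
    simp only [chiq, mem_inter]
    by_cases hA : i ∈ A <;> by_cases hB : i ∈ B <;> simp [hA, hB] <;> ring
  rw [Finset.sum_congr rfl fun i _ => h1 i, Finset.sum_add_distrib,
    Finset.sum_sub_distrib, Finset.sum_sub_distrib, ← Finset.sum_div, ← Finset.sum_div,
    sum_ind, sum_ind, sum_ind, Finset.sum_const, card_univ]
  simp [nsmul_eq_mul]
  ring

private lemma key_ineq (q m α x y N : ℚ) (hq0 : 0 ≤ q) (hqm : q ≤ m)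
    (hα1 : 1/2 ≤ α) (hα2 : 2*m - 1/2 ≤ α)
    (hx : α*N < x) (hy : α*N < y) (hyN : y ≤ N) (hy0 : 0 ≤ y) :
    q*y - x/2 - y/2 + N/4 ≤ 0 := by
  have hN0 : 0 ≤ N := le_trans hy0 hyN
  rcases le_or_gt m (1/2) with h | h
  · nlinarith [mul_le_mul_of_nonneg_right (le_trans hqm h) hy0,
      mul_nonneg (by linarith : (0:ℚ) ≤ α - 1/2) hN0]
  · nlinarith [mul_le_mul_of_nonneg_right hqm hy0,
      mul_le_mul_of_nonneg_left hyN (by linarith : (0:ℚ) ≤ m - 1/2),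
      mul_le_mul_of_nonneg_right hα2 hN0]

theorem fractional_intersecting_large_sets {n : ℕ} (hn : 0 < n)
    (L : Finset ℚ) (hL : L.Nonempty)
    (hfrac : ∀ q ∈ L, 0 ≤ q ∧ q < 1)
    (F : Finset (Finset (Fin n)))
    (hint : ∀ A ∈ F, ∀ B ∈ F, A ≠ B → ∃ q ∈ L,
      ((A ∩ B).card : ℚ) = q * A.card ∨ ((A ∩ B).card : ℚ) = q * B.card)
    (hbig : ∀ A ∈ F,
      (A.card : ℚ) > max (1 / 2) (2 * L.max' hL - 1 / 2) * n) :
    F.card ≤ n := by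
  classical
  set m := L.max' hL with hm
  set α : ℚ := max (1 / 2) (2 * m - 1 / 2) with hα
  have hα1 : (1:ℚ)/2 ≤ α := le_max_left _ _
  have hα2 : 2*m - 1/2 ≤ α := le_max_right _ _
  have hn0 : (0:ℚ) ≤ n := Nat.cast_nonneg n
  have hcard_le : ∀ A : Finset (Fin n), ((A.card : ℚ)) ≤ n := by
    intro A
    have := A.card_le_univ
    simp only [card_univ, Fintype.card_fin] at this
    exact_mod_cast this
  -- pairwise nonpositive dot products
  have hdot : ∀ A ∈ F, ∀ B ∈ F, A ≠ B → ∑ i, chiq A i * chiq B i ≤ 0 := by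
    intro A hA B hB hAB
    obtain ⟨q, hqL, hcase⟩ := hint A hA B hB hAB
    have hq0 : 0 ≤ q := (hfrac q hqL).1
    have hqm : q ≤ m := L.le_max' q hqL
    rw [dot_chiq]
    rcases hcase with h | h
    · rw [h]
      have := key_ineq q m α (B.card) (A.card) n hq0 hqm hα1 hα2
        (hbig B hB) (hbig A hA) (hcard_le A) (Nat.cast_nonneg _)
      linarith
    · rw [h]
      have := key_ineq q m α (A.card) (B.card) n hq0 hqm hα1 hα2
        (hbig A hA) (hbig B hB) (hcard_le B) (Nat.cast_nonneg _)
      linarith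
  have hsumpos : ∀ A ∈ F, (0:ℚ) < (A.card:ℚ) - n/2 := by
    intro A hA
    have h := hbig A hA
    nlinarith [mul_le_mul_of_nonneg_right hα1 hn0]
  -- the chiq vectors of members of F are linearly independent
  have hLI : LinearIndependent ℚ (fun A : {A // A ∈ F} => chiq A.1) := by
    rw [Fintype.linearIndependent_iff]
    intro g hg
    set P := Finset.univ.filter (fun A : {A // A ∈ F} => 0 < g A) with hP
    set N := Finset.univ.filter (fun A : {A // A ∈ F} => g A < 0) with hN
    have hpt : ∀ j, ∑ A : {A // A ∈ F}, g A * chiq A.1 j = 0 := by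
      intro j
      have h := congrFun hg j
      simpa [Finset.sum_apply] using h
    have hkey : ∀ j, ∑ A ∈ P, g A * chiq A.1 j = ∑ A ∈ N, (-(g A)) * chiq A.1 j := by
      intro j
      have h2 := Finset.sum_filter_add_sum_filter_not Finset.univ
        (fun A : {A // A ∈ F} => 0 < g A) (fun A => g A * chiq A.1 j)
      rw [← hP] at h2
      have h2' := h2.trans (hpt j)
      have h1 : ∑ A ∈ Finset.univ.filter (fun A : {A // A ∈ F} => ¬ 0 < g A),
          g A * chiq A.1 j = ∑ A ∈ N, g A * chiq A.1 j := by
        refine (Finset.sum_subset ?_ ?_).symm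
        · intro A hA
          simp only [hN, Finset.mem_filter, Finset.mem_univ, true_and] at hA ⊢
          linarith
        · intro A hA hnA
          have h0 : g A = 0 := by
            simp only [hN, Finset.mem_filter, Finset.mem_univ, true_and] at hA hnA
            linarith
          simp [h0]
      have h3 : ∑ A ∈ N, (-(g A)) * chiq A.1 j = - ∑ A ∈ N, g A * chiq A.1 j := by
        simp [neg_mul]
      linarith
    have hzz : ∀ j, ∑ A ∈ P, g A * chiq A.1 j = 0 := by
      have hrw : ∑ j, (∑ A ∈ P, g A * chiq A.1 j) * (∑ A ∈ P, g A * chiq A.1 j)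
          = ∑ A ∈ P, ∑ B ∈ N, (g A * (-(g B))) * (∑ j, chiq A.1 j * chiq B.1 j) := by
        have e1 : ∀ j, (∑ A ∈ P, g A * chiq A.1 j) * (∑ A ∈ P, g A * chiq A.1 j)
            = ∑ A ∈ P, ∑ B ∈ N, (g A * (-(g B))) * (chiq A.1 j * chiq B.1 j) := by
          intro j
          rw [show (∑ A ∈ P, g A * chiq A.1 j) * (∑ A ∈ P, g A * chiq A.1 j)
              = (∑ A ∈ P, g A * chiq A.1 j) * (∑ B ∈ N, (-(g B)) * chiq B.1 j) from by
            rw [← hkey j], Finset.sum_mul_sum]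
          exact Finset.sum_congr rfl fun A _ => Finset.sum_congr rfl fun B _ => by ring
        rw [Finset.sum_congr rfl fun j _ => e1 j, Finset.sum_comm]
        refine Finset.sum_congr rfl fun A _ => ?_
        rw [Finset.sum_comm]
        refine Finset.sum_congr rfl fun B _ => ?_
        rw [Finset.mul_sum]
      have hsq : ∑ j, (∑ A ∈ P, g A * chiq A.1 j) * (∑ A ∈ P, g A * chiq A.1 j) ≤ 0 := by
        rw [hrw]
        refine Finset.sum_nonpos fun A hA => Finset.sum_nonpos fun B hB => ?_
        have hgA : 0 < g A := by
          rw [hP] at hA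
          exact (Finset.mem_filter.mp hA).2
        have hgB : g B < 0 := by
          rw [hN] at hB
          exact (Finset.mem_filter.mp hB).2
        have hABne : A ≠ B := by
          intro h
          rw [h] at hgA
          linarith
        have hAB : A.1 ≠ B.1 := fun h => hABne (Subtype.ext h)
        exact mul_nonpos_of_nonneg_of_nonpos (mul_nonneg hgA.le (by linarith))
          (hdot A.1 A.2 B.1 B.2 hAB)
      have hsq2 : (0:ℚ) ≤ ∑ j, (∑ A ∈ P, g A * chiq A.1 j) * (∑ A ∈ P, g A * chiq A.1 j) :=
        Finset.sum_nonneg fun j _ => mul_self_nonneg _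
      have heq := le_antisymm hsq hsq2
      intro j
      have := (Finset.sum_eq_zero_iff_of_nonneg
        (fun j _ => mul_self_nonneg (∑ A ∈ P, g A * chiq A.1 j))).mp heq j (Finset.mem_univ j)
      exact mul_self_eq_zero.mp this
    have hPe : P = ∅ := by
      by_contra hne
      have hnonempty : P.Nonempty := Finset.nonempty_of_ne_empty hne
      have hsum : ∑ A ∈ P, g A * ((A.1.card:ℚ) - n/2) = 0 := by
        calc ∑ A ∈ P, g A * ((A.1.card:ℚ) - n/2)
            = ∑ A ∈ P, g A * (∑ j, chiq A.1 j) :=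
              Finset.sum_congr rfl fun A _ => by rw [sum_chiq]
          _ = ∑ A ∈ P, ∑ j, g A * chiq A.1 j :=
              Finset.sum_congr rfl fun A _ => Finset.mul_sum _ _ _
          _ = ∑ j, ∑ A ∈ P, g A * chiq A.1 j := Finset.sum_comm
          _ = 0 := Finset.sum_eq_zero fun j _ => hzz j
      have hpos : 0 < ∑ A ∈ P, g A * ((A.1.card:ℚ) - n/2) := by
        refine Finset.sum_pos (fun A hA => ?_) hnonempty
        have hgA : 0 < g A := by
          rw [hP] at hA
          exact (Finset.mem_filter.mp hA).2
        exact mul_pos hgA (hsumpos A.1 A.2)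
      linarith
    have hNe : N = ∅ := by
      by_contra hne
      have hnonempty : N.Nonempty := Finset.nonempty_of_ne_empty hne
      have hsum : ∑ A ∈ N, (-(g A)) * ((A.1.card:ℚ) - n/2) = 0 := by
        calc ∑ A ∈ N, (-(g A)) * ((A.1.card:ℚ) - n/2)
            = ∑ A ∈ N, (-(g A)) * (∑ j, chiq A.1 j) :=
              Finset.sum_congr rfl fun A _ => by rw [sum_chiq]
          _ = ∑ A ∈ N, ∑ j, (-(g A)) * chiq A.1 j :=
              Finset.sum_congr rfl fun A _ => Finset.mul_sum _ _ _
          _ = ∑ j, ∑ A ∈ N, (-(g A)) * chiq A.1 j := Finset.sum_comm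
          _ = ∑ j, ∑ A ∈ P, g A * chiq A.1 j :=
              Finset.sum_congr rfl fun j _ => (hkey j).symm
          _ = 0 := Finset.sum_eq_zero fun j _ => hzz j
      have hpos : 0 < ∑ A ∈ N, (-(g A)) * ((A.1.card:ℚ) - n/2) := by
        refine Finset.sum_pos (fun A hA => ?_) hnonempty
        have hgA : g A < 0 := by
          rw [hN] at hA
          exact (Finset.mem_filter.mp hA).2
        exact mul_pos (by linarith) (hsumpos A.1 A.2)
      linarith
    intro A
    by_contra hgA
    rcases lt_or_gt_of_ne hgA with h | h
    · have : A ∈ N := by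
        rw [hN]
        exact Finset.mem_filter.mpr ⟨Finset.mem_univ A, h⟩
      rw [hNe] at this
      exact absurd this (Finset.notMem_empty A)
    · have : A ∈ P := by
        rw [hP]
        exact Finset.mem_filter.mpr ⟨Finset.mem_univ A, h⟩
      rw [hPe] at this
      exact absurd this (Finset.notMem_empty A)
  calc F.card = Fintype.card {A // A ∈ F} := (Fintype.card_coe F).symm
    _ ≤ Module.finrank ℚ (Fin n → ℚ) := hLI.fintype_card_le_finrank
    _ = n := by simp
end

section
/- Let F be a family of subsets of [n] such that every A ∈ F satisfies |A| > n/2, and for any two distinct A, B ∈ F, the (+1,-1)-incidence vectors X_A, X_B satisfy ⟨X_A, X_B⟩ < 0. Then the vectors {X_A : A ∈ F} are linearly independent in ℝⁿ, and hence |F| ≤ n. -/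
theorem pm_one_vectors_linearly_independent {n : ℕ}
    (F : Finset (Finset (Fin n)))
    (X : Finset (Fin n) → (Fin n → ℝ))
    (hX : ∀ A : Finset (Fin n), ∀ j, X A j = if j ∈ A then 1 else -1)
    (hbig : ∀ A ∈ F, (A.card : ℝ) > n / 2)
    (hneg : ∀ A ∈ F, ∀ B ∈ F, A ≠ B → ∑ j, X A j * X B j < 0) :
    LinearIndependent ℝ (fun A : F => X A) ∧ F.card ≤ n := by
  -- inner product with all-ones vector is positive
  have husum : ∀ A ∈ F, 0 < ∑ j, X A j := by
    intro A hA
    have hc : A.card ≤ n := by simpa using Finset.card_le_univ A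
    have heq : ∑ j, X A j = (A.card : ℝ) - ((n:ℝ) - A.card) := by
      simp only [hX]
      rw [Finset.sum_ite, Finset.sum_const, Finset.sum_const]
      have h1 : Finset.univ.filter (· ∈ A) = A := by ext x; simp
      have h2 : Finset.univ.filter (fun j => ¬ j ∈ A) = Aᶜ := by ext x; simp
      rw [h1, h2, Finset.card_compl]
      simp [Nat.cast_sub hc]
      ring
    rw [heq]
    have := hbig A hA
    linarith
  have hli : LinearIndependent ℝ (fun A : F => X A) := by
    rw [Fintype.linearIndependent_iff]
    intro g hg
    -- pointwise
    have hgj : ∀ j, ∑ i : F, g i * X i j = 0 := by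
      intro j
      have := congrFun hg j
      simpa using this
    set P : Finset F := Finset.univ.filter (fun i => 0 < g i) with hP
    set N : Finset F := Finset.univ.filter (fun i => g i < 0) with hN
    -- the two representations agree
    have hsplit : ∀ j, ∑ i ∈ P, g i * X i j = ∑ i ∈ N, (-g i) * X i j := by
      intro j
      have h1 : ∑ i ∈ P, g i * X i j + ∑ i ∈ Pᶜ, g i * X i j = 0 := by
        rw [Finset.sum_add_sum_compl]; exact hgj j
      have h2 : ∑ i ∈ Pᶜ, g i * X i j = ∑ i ∈ N, g i * X i j := by
        apply (Finset.sum_subset _ _).symm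
        · intro i hi
          simp only [hN, Finset.mem_filter] at hi
          simp only [Finset.mem_compl, hP, Finset.mem_filter]
          push_neg
          intro _
          linarith [hi.2]
        · intro i hi hni
          simp only [Finset.mem_compl, hP, Finset.mem_filter, Finset.mem_univ, true_and,
            not_lt] at hi
          simp only [hN, Finset.mem_filter, Finset.mem_univ, true_and, not_lt] at hni
          have : g i = 0 := le_antisymm hi hni
          simp [this]
      have : ∑ i ∈ P, g i * X i j + ∑ i ∈ N, g i * X i j = 0 := by rw [← h2]; exact h1
      have := this
      rw [← sub_eq_zero]
      simp only [Finset.mul_sum, neg_mul]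
      rw [Finset.sum_neg_distrib] at *
      linarith [this]
    -- quadratic form argument: P or N must be empty
    have hterm : ∀ i ∈ P, ∀ k ∈ N, (g i * -g k) * (∑ j, X i j * X k j) < 0 := by
      intro i hi k hk
      simp only [hP, Finset.mem_filter] at hi
      simp only [hN, Finset.mem_filter] at hk
      have hne : (i : Finset (Fin n)) ≠ (k : Finset (Fin n)) := by
        intro h
        have : i = k := Subtype.ext h
        rw [this] at hi
        linarith [hi.2, hk.2]
      have hinner := hneg i i.2 k k.2 hne
      have hpos : 0 < g i * -g k := mul_pos hi.2 (by linarith [hk.2])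
      exact mul_neg_of_pos_of_neg hpos hinner
    have hempty : P = ∅ ∨ N = ∅ := by
      by_contra h
      push_neg at h
      obtain ⟨hPne, hNne⟩ := h
      have hPne' : P.Nonempty := hPne
      have hNne' : N.Nonempty := hNne
      have hTexp : ∑ j, (∑ i ∈ P, g i * X i j) * (∑ k ∈ N, (-g k) * X k j)
          = ∑ i ∈ P, ∑ k ∈ N, (g i * -g k) * (∑ j, X i j * X k j) := by
        simp_rw [Finset.sum_mul_sum]
        rw [Finset.sum_comm]
        apply Finset.sum_congr rfl
        intro i _
        rw [Finset.sum_comm]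
        apply Finset.sum_congr rfl
        intro k _
        rw [Finset.mul_sum]
        apply Finset.sum_congr rfl
        intro j _
        ring
      have hTneg : ∑ i ∈ P, ∑ k ∈ N, (g i * -g k) * (∑ j, X i j * X k j) < 0 := by
        apply Finset.sum_neg _ hPne'
        intro i hi
        exact Finset.sum_neg (fun k hk => hterm i hi k hk) hNne'
      have hTnonneg : 0 ≤ ∑ j, (∑ i ∈ P, g i * X i j) * (∑ k ∈ N, (-g k) * X k j) := by
        apply Finset.sum_nonneg
        intro j _
        rw [← hsplit j]
        exact mul_self_nonneg _
      rw [hTexp] at hTnonneg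
      linarith
    -- both representations are zero
    have hS0 : ∀ j, ∑ i ∈ P, g i * X i j = 0 := by
      intro j
      rcases hempty with h | h
      · simp [h]
      · rw [hsplit j, h]; simp
    have hS0' : ∀ j, ∑ i ∈ N, (-g i) * X i j = 0 := fun j => by rw [← hsplit j]; exact hS0 j
    -- inner with all-ones kills P and N
    have hPempty : P = ∅ := by
      by_contra h
      have hne : P.Nonempty := Finset.nonempty_of_ne_empty h
      have h0 : ∑ i ∈ P, g i * (∑ j, X i j) = 0 := by
        simp_rw [Finset.mul_sum]
        rw [Finset.sum_comm]
        simp [hS0]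
      have hpos : 0 < ∑ i ∈ P, g i * (∑ j, X i j) := by
        apply Finset.sum_pos _ hne
        intro i hi
        simp only [hP, Finset.mem_filter] at hi
        exact mul_pos hi.2 (husum i i.2)
      linarith
    have hNempty : N = ∅ := by
      by_contra h
      have hne : N.Nonempty := Finset.nonempty_of_ne_empty h
      have h0 : ∑ i ∈ N, (-g i) * (∑ j, X i j) = 0 := by
        simp_rw [Finset.mul_sum]
        rw [Finset.sum_comm]
        exact Finset.sum_eq_zero fun j _ => hS0' j
      have hpos : 0 < ∑ i ∈ N, (-g i) * (∑ j, X i j) := by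
        apply Finset.sum_pos _ hne
        intro i hi
        simp only [hN, Finset.mem_filter] at hi
        exact mul_pos (by linarith [hi.2]) (husum i i.2)
      linarith
    intro i
    by_contra hgi
    rcases lt_or_gt_of_ne hgi with h | h
    · have : i ∈ N := by simp [hN, h]
      rw [hNempty] at this
      simp at this
    · have : i ∈ P := by simp [hP, h]
      rw [hPempty] at this
      simp at this
  refine ⟨hli, ?_⟩
  have := hli.fintype_card_le_finrank
  simpa using this
end

section
/- Let a/b ∈ (0,1) be an irreducible fraction and let G be a fractional {a/b}-intersecting family of subsets of [n]. Then at most one member A of G satisfies b ∤ |A|. -/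
theorem at_most_one_not_divisible {n a b : ℕ}
    (ha : 0 < a) (hab : a < b) (hcop : Nat.Coprime a b)
    (G : Finset (Finset (Fin n)))
    (hint : ∀ A ∈ G, ∀ B ∈ G, A ≠ B →
      b * (A ∩ B).card = a * A.card ∨ b * (A ∩ B).card = a * B.card) :
    ∀ A ∈ G, ∀ B ∈ G, ¬ b ∣ A.card → ¬ b ∣ B.card → A = B := by
  intro A hA B hB hAd hBd
  by_contra hne
  rcases hint A hA B hB hne with h | h
  · exact hAd ((Nat.Coprime.dvd_of_dvd_mul_left (Nat.coprime_comm.mp hcop)) ⟨_, h.symm⟩)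
  · exact hBd ((Nat.Coprime.dvd_of_dvd_mul_left (Nat.coprime_comm.mp hcop)) ⟨_, h.symm⟩)
end

section
/- For n even, let B be the family of 2-element sets {1,2}, {1,3}, ..., {1,n} and C the family of 4-element sets {1,2,3,4}, {1,2,5,6}, ..., {1,2,n-1,n}. Then B ∪ C is a bisection closed family on [n] of cardinality 3n/2 - 2, i.e., for any two distinct members A, B, |A ∩ B| = |A|/2 or |A ∩ B| = |B|/2. -/
lemma card_pair' (j : ℕ) (h : 2 ≤ j) : ({1, j} : Finset ℕ).card = 2 := by
  rw [Finset.card_insert_of_notMem (by simp only [Finset.mem_insert, Finset.mem_singleton]; omega), Finset.card_singleton]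

lemma card_quad' (k : ℕ) (h : 1 ≤ k) :
    ({1, 2, 2 * k + 1, 2 * k + 2} : Finset ℕ).card = 4 := by
  rw [Finset.card_insert_of_notMem (by simp only [Finset.mem_insert, Finset.mem_singleton]; omega),
      Finset.card_insert_of_notMem (by simp only [Finset.mem_insert, Finset.mem_singleton]; omega),
      Finset.card_insert_of_notMem (by simp only [Finset.mem_insert, Finset.mem_singleton]; omega), Finset.card_singleton]

theorem bisection_closed_example {n : ℕ} (hn : 2 ∣ n) (hn4 : 4 ≤ n) :
    let B : Finset (Finset ℕ) := (Finset.Icc 2 n).image (fun j => {1, j})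
    let C : Finset (Finset ℕ) :=
      (Finset.Icc 1 (n / 2 - 1)).image (fun k => {1, 2, 2 * k + 1, 2 * k + 2})
    (∀ A ∈ B ∪ C, ∀ A' ∈ B ∪ C, A ≠ A' →
        2 * (A ∩ A').card = A.card ∨ 2 * (A ∩ A').card = A'.card) ∧
      (B ∪ C).card = 3 * n / 2 - 2 := by
  intro B C
  constructor
  · intro A hA A' hA' hne
    simp only [B, C, Finset.mem_union, Finset.mem_image, Finset.mem_Icc] at hA hA'
    rcases hA with ⟨j, hj, rfl⟩ | ⟨k, hk, rfl⟩ <;>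
      rcases hA' with ⟨j', hj', rfl⟩ | ⟨k', hk', rfl⟩
    · -- B B
      left
      have hjj' : j ≠ j' := by rintro rfl; exact hne rfl
      have : ({1, j} : Finset ℕ) ∩ {1, j'} = {1} := by
        ext x; simp only [Finset.mem_inter, Finset.mem_insert, Finset.mem_singleton]; omega
      rw [this, Finset.card_singleton, card_pair' j hj.1]
    · -- B C
      by_cases hmem : j = 2 ∨ j = 2 * k' + 1 ∨ j = 2 * k' + 2
      · right
        have : ({1, j} : Finset ℕ) ∩ {1, 2, 2 * k' + 1, 2 * k' + 2} = {1, j} := by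
          ext x; simp only [Finset.mem_inter, Finset.mem_insert, Finset.mem_singleton]; omega
        rw [this, card_pair' j hj.1, card_quad' k' hk'.1]
      · left
        push_neg at hmem
        have : ({1, j} : Finset ℕ) ∩ {1, 2, 2 * k' + 1, 2 * k' + 2} = {1} := by
          ext x; simp only [Finset.mem_inter, Finset.mem_insert, Finset.mem_singleton]; omega
        rw [this, Finset.card_singleton, card_pair' j hj.1]
    · -- C B
      by_cases hmem : j' = 2 ∨ j' = 2 * k + 1 ∨ j' = 2 * k + 2
      · left
        have : ({1, 2, 2 * k + 1, 2 * k + 2} : Finset ℕ) ∩ {1, j'} = {1, j'} := by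
          ext x; simp only [Finset.mem_inter, Finset.mem_insert, Finset.mem_singleton]; omega
        rw [this, card_pair' j' hj'.1, card_quad' k hk.1]
      · right
        push_neg at hmem
        have : ({1, 2, 2 * k + 1, 2 * k + 2} : Finset ℕ) ∩ {1, j'} = {1} := by
          ext x; simp only [Finset.mem_inter, Finset.mem_insert, Finset.mem_singleton]; omega
        rw [this, Finset.card_singleton, card_pair' j' hj'.1]
    · -- C C
      left
      have hkk' : k ≠ k' := by rintro rfl; exact hne rfl
      have : ({1, 2, 2 * k + 1, 2 * k + 2} : Finset ℕ) ∩ {1, 2, 2 * k' + 1, 2 * k' + 2}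
          = {1, 2} := by
        ext x; simp only [Finset.mem_inter, Finset.mem_insert, Finset.mem_singleton]; omega
      rw [this, card_pair' 2 le_rfl, card_quad' k hk.1]
  · have hdisj : Disjoint B C := by
      rw [Finset.disjoint_left]
      intro A hA hA'
      simp only [B, C, Finset.mem_image, Finset.mem_Icc] at hA hA'
      obtain ⟨j, hj, rfl⟩ := hA
      obtain ⟨k, hk, hEq⟩ := hA'
      have h2 := card_pair' j hj.1
      have h4 := card_quad' k hk.1
      rw [hEq] at h4; omega
    rw [Finset.card_union_of_disjoint hdisj]
    have hB : B.card = n - 1 := by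
      rw [Finset.card_image_of_injOn, Nat.card_Icc]
      · omega
      · intro a ha b hb h
        simp only [Finset.mem_coe, Finset.mem_Icc] at ha hb
        have h' : ({1, a} : Finset ℕ) = {1, b} := h
        have : a ∈ ({1, b} : Finset ℕ) := h' ▸ (by simp)
        simp only [Finset.mem_insert, Finset.mem_singleton] at this
        omega
    have hC : C.card = n / 2 - 1 := by
      rw [Finset.card_image_of_injOn, Nat.card_Icc]
      · omega
      · intro a ha b hb h
        simp only [Finset.mem_coe, Finset.mem_Icc] at ha hb
        have h' : ({1, 2, 2 * a + 1, 2 * a + 2} : Finset ℕ) = {1, 2, 2 * b + 1, 2 * b + 2} := h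
        have : 2 * a + 1 ∈ ({1, 2, 2 * b + 1, 2 * b + 2} : Finset ℕ) := h' ▸ (by simp)
        simp only [Finset.mem_insert, Finset.mem_singleton] at this
        omega
    rw [hB, hC]
    omega
end

section
/- For sufficiently large n, the family F of all even-sized subsets A of [n] with |A| > 2n/3 is bisection-free (no member bisects another) and has cardinality at least 1.88ⁿ. -/
private lemma chooseStep (n k : ℕ) (hn : 97 ≤ n) (h1 : 2 * n + 1 ≤ 3 * k) (h2 : 3 * k ≤ 2 * n + 6) :
    103823 * Nat.choose n k ≤ 15625 * Nat.choose (n + 3) (k + 2) := by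
  have hkn : k ≤ n := by omega
  have id1 : (n + 1) * Nat.choose n k = Nat.choose (n + 1) (k + 1) * (k + 1) :=
    Nat.add_one_mul_choose_eq n k
  have id2 : (n + 2) * Nat.choose (n + 1) (k + 1) = Nat.choose (n + 2) (k + 2) * (k + 2) :=
    Nat.add_one_mul_choose_eq (n + 1) (k + 1)
  have id3 : Nat.choose (n + 2) (k + 2) * (n + 3) = Nat.choose (n + 3) (k + 2) * (n + 3 - (k + 2)) :=
    Nat.choose_mul_succ_eq (n + 2) (k + 2)
  obtain ⟨c, hc⟩ : ∃ c, n + 1 = k + c := ⟨n + 1 - k, by omega⟩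
  have hm : n + 3 - (k + 2) = c := by omega
  rw [hm] at id3
  have hid : (n + 1) * ((n + 2) * ((n + 3) * Nat.choose n k)) =
      (k + 1) * ((k + 2) * (c * Nat.choose (n + 3) (k + 2))) := by
    calc (n + 1) * ((n + 2) * ((n + 3) * Nat.choose n k))
        = (n + 2) * ((n + 3) * ((n + 1) * Nat.choose n k)) := by ring
      _ = (n + 2) * ((n + 3) * (Nat.choose (n + 1) (k + 1) * (k + 1))) := by rw [id1]
      _ = (k + 1) * ((n + 3) * ((n + 2) * Nat.choose (n + 1) (k + 1))) := by ring
      _ = (k + 1) * ((n + 3) * (Nat.choose (n + 2) (k + 2) * (k + 2))) := by rw [id2]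
      _ = (k + 1) * ((k + 2) * (Nat.choose (n + 2) (k + 2) * (n + 3))) := by ring
      _ = (k + 1) * ((k + 2) * (Nat.choose (n + 3) (k + 2) * c)) := by rw [id3]
      _ = (k + 1) * ((k + 2) * (c * Nat.choose (n + 3) (k + 2))) := by ring
  have hineq : 103823 * ((k + 1) * ((k + 2) * c)) ≤ 15625 * ((n + 1) * ((n + 2) * (n + 3))) := by
    obtain ⟨s, b, hb, hkv, hnv, hcv⟩ :
        ∃ s b, b ≤ 5 ∧ k = 63 + 2 * s + b ∧ n = 94 + 3 * s + b ∧ c = 32 + s :=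
      ⟨c - 32, 3 * k - 2 * n - 1, by omega, by omega, by omega, by omega⟩
    subst hkv hnv hcv
    nlinarith [Nat.zero_le (s * s * s), Nat.zero_le (s * s * b), Nat.zero_le (s * b * b),
      Nat.zero_le (b * b * b), Nat.zero_le (s * s), Nat.zero_le (s * b), Nat.zero_le (b * b),
      Nat.zero_le s, Nat.zero_le b]
  have hpos : 0 < (n + 1) * ((n + 2) * (n + 3)) := by positivity
  have key : 103823 * Nat.choose n k * ((n + 1) * ((n + 2) * (n + 3))) ≤
      15625 * Nat.choose (n + 3) (k + 2) * ((n + 1) * ((n + 2) * (n + 3))) := by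
    calc 103823 * Nat.choose n k * ((n + 1) * ((n + 2) * (n + 3)))
        = 103823 * ((n + 1) * ((n + 2) * ((n + 3) * Nat.choose n k))) := by ring
      _ = 103823 * ((k + 1) * ((k + 2) * (c * Nat.choose (n + 3) (k + 2)))) := by rw [hid]
      _ = 103823 * ((k + 1) * ((k + 2) * c)) * Nat.choose (n + 3) (k + 2) := by ring
      _ ≤ 15625 * ((n + 1) * ((n + 2) * (n + 3))) * Nat.choose (n + 3) (k + 2) :=
          Nat.mul_le_mul_right _ hineq
      _ = 15625 * Nat.choose (n + 3) (k + 2) * ((n + 1) * ((n + 2) * (n + 3))) := by ring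
  exact Nat.le_of_mul_le_mul_right key hpos

set_option maxRecDepth 10000 in
private lemma chooseVal952 : Nat.choose 952 636 = 1588745105281184482524887338630669971871235897827964882590040792885501887254065615022464114024755710708546466452767873582265719795720868597987157854819672214300641276407010753149156634769373433105581596943068532959053845031187775602137166176264441430194117363360 := by
  have h : Nat.choose 952 316 = 1588745105281184482524887338630669971871235897827964882590040792885501887254065615022464114024755710708546466452767873582265719795720868597987157854819672214300641276407010753149156634769373433105581596943068532959053845031187775602137166176264441430194117363360 := by
    rw [Nat.choose_eq_descFactorial_div_factorial]
    decide
  calc Nat.choose 952 636 = Nat.choose 952 (952 - 316) := by norm_num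
    _ = Nat.choose 952 316 := Nat.choose_symm (by norm_num)
    _ = 1588745105281184482524887338630669971871235897827964882590040792885501887254065615022464114024755710708546466452767873582265719795720868597987157854819672214300641276407010753149156634769373433105581596943068532959053845031187775602137166176264441430194117363360 := h

set_option maxRecDepth 10000 in
private lemma chooseVal953 : Nat.choose 953 636 = 4776258944268040415918667614242992060546649244889749315799081626561146052218058457780467825443508493076481963815418875469713662351173463009090730080893210158449561944529593841486265845221491740535076535920329059652928436324044006778664729861135686697081999518240 := by
  have h : Nat.choose 953 317 = 4776258944268040415918667614242992060546649244889749315799081626561146052218058457780467825443508493076481963815418875469713662351173463009090730080893210158449561944529593841486265845221491740535076535920329059652928436324044006778664729861135686697081999518240 := by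
    rw [Nat.choose_eq_descFactorial_div_factorial]
    decide
  calc Nat.choose 953 636 = Nat.choose 953 (953 - 317) := by norm_num
    _ = Nat.choose 953 317 := Nat.choose_symm (by norm_num)
    _ = 4776258944268040415918667614242992060546649244889749315799081626561146052218058457780467825443508493076481963815418875469713662351173463009090730080893210158449561944529593841486265845221491740535076535920329059652928436324044006778664729861135686697081999518240 := h

set_option maxRecDepth 10000 in
private lemma chooseVal954 : Nat.choose 954 638 = 3554147028852064798505168778423884423375630702649735015194969236038268792339878846978276695804134169916791392186954290738325384814488901089755565640279825666200793354775152705310929327766305342906199160051657882910486833009957383606517202686832704486543368282720 := by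
  have h : Nat.choose 954 316 = 3554147028852064798505168778423884423375630702649735015194969236038268792339878846978276695804134169916791392186954290738325384814488901089755565640279825666200793354775152705310929327766305342906199160051657882910486833009957383606517202686832704486543368282720 := by
    rw [Nat.choose_eq_descFactorial_div_factorial]
    decide
  calc Nat.choose 954 638 = Nat.choose 954 (954 - 316) := by norm_num
    _ = Nat.choose 954 316 := Nat.choose_symm (by norm_num)
    _ = 3554147028852064798505168778423884423375630702649735015194969236038268792339878846978276695804134169916791392186954290738325384814488901089755565640279825666200793354775152705310929327766305342906199160051657882910486833009957383606517202686832704486543368282720 := h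

private def P (n : ℕ) : Prop :=
  ∃ k, 2 * n + 1 ≤ 3 * k ∧ 3 * k ≤ 2 * n + 6 ∧ Even k ∧ (1.88 : ℝ) ^ n ≤ (Nat.choose n k : ℝ)

private lemma base952 : P 952 := by
  refine ⟨636, by norm_num, by norm_num, ⟨318, rfl⟩, ?_⟩
  rw [chooseVal952]
  norm_num
  rw [div_pow, div_le_iff₀ (by positivity)]
  exact_mod_cast (by decide +kernel : (47:ℕ) ^ 952 ≤ 1588745105281184482524887338630669971871235897827964882590040792885501887254065615022464114024755710708546466452767873582265719795720868597987157854819672214300641276407010753149156634769373433105581596943068532959053845031187775602137166176264441430194117363360 * 25 ^ 952)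

private lemma base953 : P 953 := by
  refine ⟨636, by norm_num, by norm_num, ⟨318, rfl⟩, ?_⟩
  rw [chooseVal953]
  norm_num
  rw [div_pow, div_le_iff₀ (by positivity)]
  exact_mod_cast (by decide +kernel : (47:ℕ) ^ 953 ≤ 4776258944268040415918667614242992060546649244889749315799081626561146052218058457780467825443508493076481963815418875469713662351173463009090730080893210158449561944529593841486265845221491740535076535920329059652928436324044006778664729861135686697081999518240 * 25 ^ 953)

private lemma base954 : P 954 := by
  refine ⟨638, by norm_num, by norm_num, ⟨319, rfl⟩, ?_⟩
  rw [chooseVal954]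
  norm_num
  rw [div_pow, div_le_iff₀ (by positivity)]
  exact_mod_cast (by decide +kernel : (47:ℕ) ^ 954 ≤ 3554147028852064798505168778423884423375630702649735015194969236038268792339878846978276695804134169916791392186954290738325384814488901089755565640279825666200793354775152705310929327766305342906199160051657882910486833009957383606517202686832704486543368282720 * 25 ^ 954)

private lemma realStep (n k : ℕ) (hn : 97 ≤ n) (h1 : 2 * n + 1 ≤ 3 * k) (h2 : 3 * k ≤ 2 * n + 6)
    (hP : (1.88 : ℝ) ^ n ≤ (Nat.choose n k : ℝ)) :
    (1.88 : ℝ) ^ (n + 3) ≤ (Nat.choose (n + 3) (k + 2) : ℝ) := by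
  have hnat := chooseStep n k hn h1 h2
  have hcast : (103823 : ℝ) * (Nat.choose n k : ℝ) ≤ 15625 * (Nat.choose (n + 3) (k + 2) : ℝ) := by
    exact_mod_cast hnat
  have h3 : (1.88 : ℝ) ^ (n + 3) = 1.88 ^ n * (103823 / 15625) := by
    rw [pow_add]; norm_num
  rw [h3]
  have hge : (1.88 : ℝ) ^ n * (103823 / 15625) ≤ (Nat.choose n k : ℝ) * (103823 / 15625) := by
    apply mul_le_mul_of_nonneg_right hP; norm_num
  refine le_trans hge ?_
  rw [div_eq_mul_inv, ← mul_assoc]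
  rw [mul_inv_le_iff₀ (by norm_num : (0:ℝ) < 15625)]
  linarith

private lemma keyP : ∀ d : ℕ, P (952 + d) := by
  intro d
  induction d using Nat.strong_induction_on with
  | _ d ih =>
    match d with
    | 0 => exact base952
    | 1 => exact base953
    | 2 => exact base954
    | (e + 3) =>
      obtain ⟨k, h1, h2, hk, hP⟩ := ih e (by omega)
      refine ⟨k + 2, by omega, by omega, hk.add (⟨1, rfl⟩ : Even 2), ?_⟩
      have hrw : 952 + (e + 3) = (952 + e) + 3 := by omega
      rw [hrw]
      exact realStep (952 + e) k (by omega) h1 h2 hP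

theorem bisection_free_family_exponential :
    ∃ N : ℕ, ∀ n : ℕ, n ≥ N →
      let F : Finset (Finset (Fin n)) :=
        Finset.univ.filter (fun A => Even A.card ∧ 3 * A.card > 2 * n)
      (∀ A ∈ F, ∀ B ∈ F,
          2 * (A ∩ B).card ≠ A.card ∧ 2 * (A ∩ B).card ≠ B.card) ∧
        (F.card : ℝ) ≥ 1.88 ^ n := by
  refine ⟨952, fun n hn => ?_⟩
  intro F
  constructor
  · intro A hA B hB
    rw [Finset.mem_filter] at hA hB
    obtain ⟨-, -, hA2⟩ := hA
    obtain ⟨-, -, hB2⟩ := hB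
    have hu : (A ∪ B).card ≤ n := by
      have := Finset.card_le_univ (A ∪ B)
      simpa using this
    have hie := Finset.card_union_add_card_inter A B
    omega
  · obtain ⟨k, h1, h2, hk, hP⟩ : P n := by
      have := keyP (n - 952)
      have hn' : 952 + (n - 952) = n := by omega
      rwa [hn'] at this
    have hsub : Finset.powersetCard k (Finset.univ : Finset (Fin n)) ⊆ F := by
      intro A hA
      rw [Finset.mem_powersetCard] at hA
      rw [Finset.mem_filter]
      obtain ⟨-, hAc⟩ := hA
      refine ⟨Finset.mem_univ A, ?_, by omega⟩
      rw [hAc]; exact hk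
    have hcard : Nat.choose n k ≤ F.card := by
      have := Finset.card_le_card hsub
      rwa [Finset.card_powersetCard, Finset.card_fin] at this
    have : (Nat.choose n k : ℝ) ≤ (F.card : ℝ) := by exact_mod_cast hcard
    linarith
end

section
/- Let p be a prime, Ω = {0,1}ⁿ, and f ∈ F_p^Ω be such that f(V_A) ≠ 0 for every A ⊆ [n] with |A| ≢ i (mod p), for a fixed i ∈ F_p. Then the set of functions {x_A · f : A ⊆ [n], |A| ≢ i (mod p), |A| < p} is linearly independent in the F_p-vector space F_p^{{0,1}ⁿ}, where x_A = Π_{j∈A} x_j is the monomial corresponding to A and V_A is the 0-1 incidence vector of A. -/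
theorem monomial_times_f_linearly_independent {p n : ℕ} (hp : p.Prime)
    (i : ZMod p)
    (V : Finset (Fin n) → (Fin n → ZMod p))
    (hV : ∀ A : Finset (Fin n), ∀ j, V A j = if j ∈ A then 1 else 0)
    (f : (Fin n → ZMod p) → ZMod p)
    (hf : ∀ A : Finset (Fin n), (A.card : ZMod p) ≠ i → f (V A) ≠ 0) :
    LinearIndependent (ZMod p)
      (fun A : {A : Finset (Fin n) // (A.card : ZMod p) ≠ i ∧ A.card < p} =>
        (fun x : Fin n → ZMod p => (∏ j ∈ A.1, x j) * f x)) := by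
  rw [linearIndependent_iff']
  intro s g hg A hA
  by_contra hgA
  have hne : (s.filter fun C => g C ≠ 0).Nonempty :=
    ⟨A, Finset.mem_filter.2 ⟨hA, hgA⟩⟩
  obtain ⟨B, hB, hBmin⟩ := Finset.exists_min_image _ (fun C => C.1.card) hne
  have hBs := (Finset.mem_filter.1 hB).1
  have hgB := (Finset.mem_filter.1 hB).2
  have hx := congrFun hg (V B.1)
  simp only [Finset.sum_apply, Pi.smul_apply, smul_eq_mul, Pi.zero_apply] at hx
  have hterm : ∀ C ∈ s, C ≠ B →
      g C * ((∏ j ∈ C.1, V B.1 j) * f (V B.1)) = 0 := by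
    intro C hC hCB
    by_cases hgC : g C = 0
    · rw [hgC, zero_mul]
    · have hmin := hBmin C (Finset.mem_filter.2 ⟨hC, hgC⟩)
      have hnsub : ¬ C.1 ⊆ B.1 := by
        intro hsub
        exact hCB (Subtype.ext (Finset.eq_of_subset_of_card_le hsub hmin))
      obtain ⟨j, hjC, hjB⟩ := Finset.not_subset.1 hnsub
      have hz : V B.1 j = 0 := by rw [hV]; simp [hjB]
      rw [Finset.prod_eq_zero hjC hz, zero_mul, mul_zero]
  rw [Finset.sum_eq_single B hterm (fun h => (h hBs).elim)] at hx
  have hprod : (∏ j ∈ B.1, V B.1 j) = 1 := by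
    apply Finset.prod_eq_one
    intro j hj; rw [hV]; simp [hj]
  haveI : Fact p.Prime := ⟨hp⟩
  rw [hprod, one_mul] at hx
  rcases mul_eq_zero.1 hx with h | h
  · exact hgB h
  · exact hf B.1 B.2.1 h
end

section
/- Let p be a prime, L = {a₁/b₁, ..., a_s/b_s} irreducible fractions in [0,1) with each b_l < p, and let i ∈ {1, ..., p-1}. Let F_i be a fractional L-intersecting family of subsets of [n] with |A| ≡ i (mod p) for all A ∈ F_i. Then |F_i| ≤ Σ_{j=0}^{s} C(n, j). -/
open Finset

section Aux

variable {p n : ℕ}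

/-- The "monomial" function attached to a set `T`: indicator of `T ⊆ B`. -/
noncomputable def eTfun (p n : ℕ) (T : Finset (Fin n)) : Finset (Fin n) → ZMod p :=
  fun B => if T ⊆ B then 1 else 0

/-- Span of monomials of degree at most `k`. -/
noncomputable def Msp (p n k : ℕ) : Submodule (ZMod p) (Finset (Fin n) → ZMod p) :=
  Submodule.span (ZMod p) { f | ∃ T : Finset (Fin n), T.card ≤ k ∧ f = eTfun p n T }

lemma Msp_mono {k k' : ℕ} (h : k ≤ k') : Msp p n k ≤ Msp p n k' := by
  apply Submodule.span_mono
  rintro f ⟨T, hT, rfl⟩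
  exact ⟨T, hT.trans h, rfl⟩

lemma eTfun_mem {k : ℕ} {T : Finset (Fin n)} (hT : T.card ≤ k) :
    eTfun p n T ∈ Msp p n k :=
  Submodule.subset_span ⟨T, hT, rfl⟩

lemma mul_step {k : ℕ} (A : Finset (Fin n)) (c : ZMod p)
    {g : Finset (Fin n) → ZMod p} (hg : g ∈ Msp p n k) :
    (fun B => ((∑ j ∈ A, if j ∈ B then (1 : ZMod p) else 0) - c) * g B) ∈ Msp p n (k + 1) := by
  classical
  induction hg using Submodule.span_induction with
  | mem f hf =>
    obtain ⟨T, hT, rfl⟩ := hf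
    have hfun : (fun B => ((∑ j ∈ A, if j ∈ B then (1 : ZMod p) else 0) - c) * eTfun p n T B)
        = (∑ j ∈ A, eTfun p n (insert j T)) - c • eTfun p n T := by
      funext B
      simp only [Pi.sub_apply, Pi.smul_apply, Finset.sum_apply, smul_eq_mul, sub_mul,
        Finset.sum_mul]
      congr 1
      apply Finset.sum_congr rfl
      intro j _
      by_cases hj : j ∈ B
      · by_cases hT' : T ⊆ B
        · simp [eTfun, hj, hT', Finset.insert_subset_iff]
        · have : ¬ insert j T ⊆ B := fun h => hT' ((Finset.subset_insert j T).trans h)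
          simp [eTfun, hj, hT', this]
      · have : ¬ insert j T ⊆ B := fun h => hj (h (Finset.mem_insert_self j T))
        simp [eTfun, hj, this]
    rw [hfun]
    refine Submodule.sub_mem _ (Submodule.sum_mem _ fun j _ => ?_) (Submodule.smul_mem _ _ ?_)
    · exact eTfun_mem ((Finset.card_insert_le j T).trans (Nat.succ_le_succ hT))
    · exact eTfun_mem (hT.trans (Nat.le_succ k))
  | zero =>
    have : (fun B => ((∑ j ∈ A, if j ∈ B then (1 : ZMod p) else 0) - c) * (0 : Finset (Fin n) → ZMod p) B) = (0 : Finset (Fin n) → ZMod p) := by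
      funext B; simp
    rw [this]; exact Submodule.zero_mem _
  | add x y hx hy hx' hy' =>
    have : (fun B => ((∑ j ∈ A, if j ∈ B then (1 : ZMod p) else 0) - c) * (x + y) B)
        = (fun B => ((∑ j ∈ A, if j ∈ B then (1 : ZMod p) else 0) - c) * x B)
          + fun B => ((∑ j ∈ A, if j ∈ B then (1 : ZMod p) else 0) - c) * y B := by
      funext B; simp [mul_add]
    rw [this]; exact Submodule.add_mem _ hx' hy'
  | smul r x hx hx' =>
    have : (fun B => ((∑ j ∈ A, if j ∈ B then (1 : ZMod p) else 0) - c) * (r • x) B)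
        = r • fun B => ((∑ j ∈ A, if j ∈ B then (1 : ZMod p) else 0) - c) * x B := by
      funext B; simp only [Pi.smul_apply, smul_eq_mul]; ring
    rw [this]; exact Submodule.smul_mem _ _ hx'

lemma prod_mem_Msp {s : ℕ} (A : Finset (Fin n)) (c : Fin s → ZMod p) (E : Finset (Fin s)) :
    (fun B => ∏ l ∈ E, ((∑ j ∈ A, if j ∈ B then (1 : ZMod p) else 0) - c l))
      ∈ Msp p n E.card := by
  classical
  induction E using Finset.cons_induction with
  | empty =>
    have h1 : (fun B : Finset (Fin n) => ∏ l ∈ (∅ : Finset (Fin s)),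
        ((∑ j ∈ A, if j ∈ B then (1 : ZMod p) else 0) - c l)) = eTfun p n ∅ := by
      funext B; simp [eTfun]
    rw [h1]
    exact eTfun_mem le_rfl
  | cons l E hl ih =>
    have : (fun B => ∏ m ∈ Finset.cons l E hl,
        ((∑ j ∈ A, if j ∈ B then (1 : ZMod p) else 0) - c m))
        = fun B : Finset (Fin n) => ((∑ j ∈ A, if j ∈ B then (1 : ZMod p) else 0) - c l) *
            ∏ m ∈ E, ((∑ j ∈ A, if j ∈ B then (1 : ZMod p) else 0) - c m) := by
      funext B; rw [Finset.prod_cons]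
    rw [this, Finset.card_cons]
    exact mul_step A (c l) ih

lemma card_inter_sum (A B : Finset (Fin n)) :
    ((A ∩ B).card : ZMod p) = ∑ j ∈ A, if j ∈ B then (1 : ZMod p) else 0 := by
  classical
  rw [← Finset.filter_mem_eq_inter, Finset.card_filter]
  push_cast
  rfl

end Aux

theorem fractional_intersecting_residue_class_bound {p n s : ℕ} (hp : p.Prime)
    (a b : Fin s → ℕ)
    (hirr : ∀ l, Nat.Coprime (a l) (b l) ∧ a l < b l ∧ b l < p)
    (i : ℕ) (hi1 : 1 ≤ i) (hi2 : i ≤ p - 1)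
    (F : Finset (Finset (Fin n)))
    (hmod : ∀ A ∈ F, A.card % p = i % p)
    (hint : ∀ A ∈ F, ∀ B ∈ F, A ≠ B → ∃ l : Fin s,
      b l * (A ∩ B).card = a l * A.card ∨ b l * (A ∩ B).card = a l * B.card) :
    F.card ≤ ∑ j ∈ Finset.range (s + 1), n.choose j := by
  classical
  haveI : Fact p.Prime := ⟨hp⟩
  set R := ZMod p
  -- basic nonvanishing facts
  have hcast_ne : ∀ m : ℕ, 0 < m → m < p → (m : R) ≠ 0 := by
    intro m hm0 hmp h
    rw [ZMod.natCast_eq_zero_iff] at h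
    exact absurd (Nat.le_of_dvd hm0 h) (not_le.2 hmp)
  have hi_ne : (i : R) ≠ 0 :=
    hcast_ne i hi1 (lt_of_le_of_lt hi2 (Nat.sub_lt hp.pos one_pos))
  have hb_ne : ∀ l, ((b l : R)) ≠ 0 := fun l =>
    hcast_ne (b l) (Nat.lt_of_le_of_lt (Nat.zero_le _) (hirr l).2.1) (hirr l).2.2
  -- the polynomial functions
  set c : Fin s → R := fun l => (a l : R) * (b l : R)⁻¹ * (i : R) with hc
  set g : Finset (Fin n) → Finset (Fin n) → R :=
    fun A B => ∏ l : Fin s, (((A ∩ B).card : R) - c l) with hg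
  -- cast of cards
  have hcard : ∀ A ∈ F, ((A.card : R)) = (i : R) := by
    intro A hA
    rw [ZMod.natCast_eq_natCast_iff']
    exact hmod A hA
  -- diagonal nonzero
  have hdiag : ∀ A ∈ F, g A A ≠ 0 := by
    intro A hA
    rw [hg]
    rw [Finset.prod_ne_zero_iff]
    intro l _
    rw [Finset.inter_self, hcard A hA]
    intro h0
    have hb : (b l : R) ≠ 0 := hb_ne l
    have : (b l : R) * ((i : R) - c l) = 0 := by rw [h0, mul_zero]
    rw [hc] at this
    simp only [mul_sub] at this
    rw [show (b l : R) * ((a l : R) * (b l : R)⁻¹ * (i : R))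
        = (a l : R) * ((b l : R) * (b l : R)⁻¹) * (i : R) by ring,
      mul_inv_cancel₀ hb, mul_one] at this
    have hfac : ((b l : R) - (a l : R)) * (i : R) = 0 := by
      rw [sub_mul]; linear_combination this
    have hba : ((b l : R) - (a l : R)) ≠ 0 := by
      have h1 : ((b l - a l : ℕ) : R) ≠ 0 := by
        apply hcast_ne
        · exact Nat.sub_pos_of_lt (hirr l).2.1
        · exact lt_of_le_of_lt (Nat.sub_le _ _) (hirr l).2.2
      rwa [Nat.cast_sub (le_of_lt (hirr l).2.1)] at h1
    rcases mul_eq_zero.1 hfac with h | h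
    · exact hba h
    · exact hi_ne h
  -- off-diagonal zero
  have hoff : ∀ A ∈ F, ∀ B ∈ F, A ≠ B → g A B = 0 := by
    intro A hA B hB hAB
    obtain ⟨l, hl⟩ := hint A hA B hB hAB
    rw [hg]
    apply Finset.prod_eq_zero (Finset.mem_univ l)
    have hb : (b l : R) ≠ 0 := hb_ne l
    have key : (b l : R) * ((A ∩ B).card : R) = (a l : R) * (i : R) := by
      rcases hl with h | h
      · have := congrArg (fun m : ℕ => (m : R)) h
        push_cast at this
        rw [← Nat.cast_mul (α := ZMod p), this, Nat.cast_mul (α := ZMod p), hcard A hA]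
      · have := congrArg (fun m : ℕ => (m : R)) h
        push_cast at this
        rw [← Nat.cast_mul (α := ZMod p), this, Nat.cast_mul (α := ZMod p), hcard B hB]
    have : (b l : R) * (((A ∩ B).card : R) - c l) = 0 := by
      rw [mul_sub, key, hc]
      rw [show (b l : R) * ((a l : R) * (b l : R)⁻¹ * (i : R))
          = (a l : R) * ((b l : R) * (b l : R)⁻¹) * (i : R) by ring,
        mul_inv_cancel₀ hb, mul_one]
      ring
    rcases mul_eq_zero.1 this with h | h
    · exact absurd h hb
    · exact h
  -- each g A lies in the span of low-degree monomials
  have hmem : ∀ A : Finset (Fin n), g A ∈ Msp p n s := by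
    intro A
    have : g A = fun B => ∏ l ∈ (Finset.univ : Finset (Fin s)),
        ((∑ j ∈ A, if j ∈ B then (1 : R) else 0) - c l) := by
      funext B
      rw [hg]
      apply Finset.prod_congr rfl
      intro l _
      rw [card_inter_sum]
    rw [this]
    have := prod_mem_Msp A c (Finset.univ : Finset (Fin s))
    simpa [Finset.card_univ] using this
  -- linear independence of the family (g A) for A ∈ F
  have hli : LinearIndependent R (fun A : {A // A ∈ F} => g A.1) := by
    rw [Fintype.linearIndependent_iff]
    intro coef hsum A
    have h0 : (∑ A' : {A // A ∈ F}, coef A' • g A'.1) A.1 = 0 := by rw [hsum]; rfl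
    rw [Finset.sum_apply] at h0
    have h1 : ∀ A' : {A // A ∈ F}, A' ∈ Finset.univ → A' ≠ A →
        (coef A' • g A'.1) A.1 = 0 := by
      intro A' _ hne
      have : A'.1 ≠ A.1 := fun h => hne (Subtype.ext h)
      simp [hoff A'.1 A'.2 A.1 A.2 this]
    rw [Finset.sum_eq_single A h1 (fun h => absurd (Finset.mem_univ A) h)] at h0
    have : coef A * g A.1 A.1 = 0 := h0
    rcases mul_eq_zero.1 this with h | h
    · exact h
    · exact absurd h (hdiag A.1 A.2)
  -- generators as a finset
  set G : Finset (Finset (Fin n) → R) :=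
    (Finset.univ.filter fun T : Finset (Fin n) => T.card ≤ s).image (eTfun p n) with hG
  have hspan_eq : Msp p n s = Submodule.span R (G : Set (Finset (Fin n) → R)) := by
    unfold Msp
    congr 1
    ext f
    simp only [hG, Finset.coe_image, Set.mem_image, Finset.mem_coe, Finset.mem_filter,
      Finset.mem_univ, true_and, Set.mem_setOf_eq]
    constructor
    · rintro ⟨T, hT, rfl⟩; exact ⟨T, hT, rfl⟩
    · rintro ⟨T, hT, rfl⟩; exact ⟨T, hT, rfl⟩
  -- lift to elements of the span submodule
  set M := Submodule.span R (G : Set (Finset (Fin n) → R)) with hM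
  have hmemM : ∀ A : Finset (Fin n), g A ∈ M := fun A => hspan_eq ▸ hmem A
  set v : {A // A ∈ F} → M := fun A => ⟨g A.1, hmemM A.1⟩ with hv
  have hliv : LinearIndependent R v := by
    have hcomp : (M.subtype ∘ v) = fun A : {A // A ∈ F} => g A.1 := rfl
    have := hli
    rw [← hcomp] at this
    exact LinearIndependent.of_comp M.subtype this
  haveI : FiniteDimensional R M := FiniteDimensional.span_finset R G
  have hcard_le : Fintype.card {A // A ∈ F} ≤ Module.finrank R M :=
    hliv.fintype_card_le_finrank
  rw [Fintype.card_coe] at hcard_le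
  have hrank : Module.finrank R M ≤ G.card := finrank_span_finset_le_card G
  have hGcard : G.card ≤ (Finset.univ.filter fun T : Finset (Fin n) => T.card ≤ s).card :=
    Finset.card_image_le
  have hfilter : (Finset.univ.filter fun T : Finset (Fin n) => T.card ≤ s).card
      = ∑ j ∈ Finset.range (s + 1), n.choose j := by
    have hun : (Finset.univ.filter fun T : Finset (Fin n) => T.card ≤ s)
        = (Finset.range (s + 1)).biUnion
            (fun j => Finset.powersetCard j (Finset.univ : Finset (Fin n))) := by
      ext T
      simp only [Finset.mem_filter, Finset.mem_univ, true_and, Finset.mem_biUnion,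
        Finset.mem_range, Finset.mem_powersetCard]
      constructor
      · intro h; exact ⟨T.card, Nat.lt_succ_of_le h, Finset.subset_univ T, rfl⟩
      · rintro ⟨j, hj, -, rfl⟩; exact Nat.lt_succ_iff.1 hj
    rw [hun, Finset.card_biUnion]
    · apply Finset.sum_congr rfl
      intro j _
      rw [Finset.card_powersetCard, Finset.card_univ, Fintype.card_fin]
    · intro x _ y _ hxy
      apply Finset.disjoint_left.2
      intro T hT hT'
      rw [Finset.mem_powersetCard] at hT hT'
      exact hxy (hT.2 ▸ hT'.2 ▸ rfl)
  calc F.card ≤ Module.finrank R M := hcard_le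
    _ ≤ G.card := hrank
    _ ≤ _ := hfilter ▸ hGcard
end

section
/- Let b ≥ 2, k ≥ 2 and i ∈ {1, ..., b-1} with b prime and let a ∈ {1,...,b-1}. Let F' be a family of subsets of [n] such that every A ∈ F' has |A| ≡ i·b^{k-1} (mod b^k), and for every distinct A, B ∈ F', |A ∩ B| = (a/b)|A| or (a/b)|B|. Then |F'| ≤ n + 1. -/
open Matrix

lemma my_rank_add_le {m p : Type*} [Fintype m] [Fintype p] (A B : Matrix m p ℚ) :
    (A + B).rank ≤ A.rank + B.rank := by
  classical
  rw [Matrix.rank, Matrix.rank, Matrix.rank, Matrix.mulVecLin_add]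
  have hle : LinearMap.range (A.mulVecLin + B.mulVecLin) ≤
      LinearMap.range A.mulVecLin ⊔ LinearMap.range B.mulVecLin := by
    rintro x ⟨v, rfl⟩
    exact Submodule.mem_sup.2 ⟨A.mulVecLin v, ⟨v, rfl⟩, B.mulVecLin v, ⟨v, rfl⟩, rfl⟩
  exact le_trans (Submodule.finrank_mono hle)
    (Submodule.finrank_add_le_finrank_add_finrank _ _)

theorem partition_class_bound {n b k a i : ℕ} (hb : b.Prime) (hk : 2 ≤ k)
    (hi : 1 ≤ i ∧ i ≤ b - 1) (ha : 1 ≤ a ∧ a ≤ b - 1)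
    (F : Finset (Finset (Fin n)))
    (hmod : ∀ A ∈ F, A.card % b ^ k = i * b ^ (k - 1))
    (hint : ∀ A ∈ F, ∀ B ∈ F, A ≠ B →
      b * (A ∩ B).card = a * A.card ∨ b * (A ∩ B).card = a * B.card) :
    F.card ≤ n + 1 := by
  classical
  haveI : Fact b.Prime := ⟨hb⟩
  have hb2 : 2 ≤ b := hb.two_le
  set c : ℕ := b ^ (k - 2) with hc
  have hbk2 : b ^ k = c * b ^ 2 := by rw [hc, ← pow_add]; congr 1; omega
  have hbk1 : b ^ (k - 1) = c * b := by rw [hc, ← pow_succ]; congr 1; omega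
  -- decomposition of cardinalities
  have hcard : ∀ A ∈ F, A.card = c * b ^ 2 * (A.card / b ^ k) + i * (c * b) := by
    intro A hA
    conv_lhs => rw [← Nat.div_add_mod A.card (b ^ k)]
    rw [hmod A hA, hbk2, hbk1]
  -- key integer decomposition of matrix entries
  have key : ∀ A ∈ F, ∀ B ∈ F, ∃ t : ℤ,
      (((A ∩ B).card : ℤ) - (a : ℤ) * i * c = (c : ℤ) * t) ∧
      (((t : ℤ) : ZMod b) = if A = B then -((a : ZMod b) * i) else 0) := by
    intro A hA B hB
    obtain ⟨q, hq⟩ : ∃ q, A.card = c * b ^ 2 * q + i * (c * b) := ⟨_, hcard A hA⟩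
    obtain ⟨r, hr⟩ : ∃ r, B.card = c * b ^ 2 * r + i * (c * b) := ⟨_, hcard B hB⟩
    by_cases hAB : A = B
    · subst hAB
      refine ⟨(b : ℤ) ^ 2 * q + i * b - a * i, ?_, ?_⟩
      · rw [Finset.inter_self]
        push_cast [hq]
        ring
      · rw [if_pos rfl]
        push_cast
        rw [ZMod.natCast_self]
        ring
    · rcases hint A hA B hB hAB with h | h
      · refine ⟨(a : ℤ) * b * q, ?_, ?_⟩
        · have h2 : b * (A ∩ B).card = b * (a * (c * b) * q + a * i * c) := by
            rw [h, hq]; ring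
          have h3 := Nat.eq_of_mul_eq_mul_left (by omega : 0 < b) h2
          have h4 : (((A ∩ B).card : ℤ))
              = (a : ℤ) * ((c : ℤ) * b) * (q : ℤ) + (a : ℤ) * i * c := by
            exact_mod_cast congrArg (fun z : ℕ => (z : ℤ)) h3
          rw [h4]; ring
        · rw [if_neg hAB]
          push_cast
          rw [ZMod.natCast_self]
          ring
      · refine ⟨(a : ℤ) * b * r, ?_, ?_⟩
        · have h2 : b * (A ∩ B).card = b * (a * (c * b) * r + a * i * c) := by
            rw [h, hr]; ring
          have h3 := Nat.eq_of_mul_eq_mul_left (by omega : 0 < b) h2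
          have h4 : (((A ∩ B).card : ℤ))
              = (a : ℤ) * ((c : ℤ) * b) * (r : ℤ) + (a : ℤ) * i * c := by
            exact_mod_cast congrArg (fun z : ℕ => (z : ℤ)) h3
          rw [h4]; ring
        · rw [if_neg hAB]
          push_cast
          rw [ZMod.natCast_self]
          ring
  -- the integer matrix
  set N : Matrix ↥F ↥F ℤ := fun A B => (key A.1 A.2 B.1 B.2).choose with hN
  have hN1 : ∀ A B : ↥F, ((((A : Finset (Fin n)) ∩ B).card : ℤ)
      - (a : ℤ) * i * c = (c : ℤ) * N A B) :=
    fun A B => (key A.1 A.2 B.1 B.2).choose_spec.1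
  have hN2 : ∀ A B : ↥F, ((N A B : ℤ) : ZMod b)
      = if (A : Finset (Fin n)) = B then -((a : ZMod b) * i) else 0 :=
    fun A B => (key A.1 A.2 B.1 B.2).choose_spec.2
  -- mod b, N is a nonzero scalar matrix
  have hR : N.map (Int.cast : ℤ → ZMod b)
      = (-((a : ZMod b) * i)) • (1 : Matrix ↥F ↥F (ZMod b)) := by
    ext A B
    rw [Matrix.map_apply, hN2 A B, Matrix.smul_apply, Matrix.one_apply]
    by_cases h : A = B
    · simp [h]
    · have h' : (A : Finset (Fin n)) ≠ (B : Finset (Fin n)) := fun hh => h (Subtype.ext hh)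
      simp [h, h']
  have hai : -((a : ZMod b) * i) ≠ 0 := by
    have hA : (a : ZMod b) ≠ 0 := by
      rw [Ne, ZMod.natCast_eq_zero_iff]
      intro hd
      have := Nat.le_of_dvd (by omega) hd
      omega
    have hI : (i : ZMod b) ≠ 0 := by
      rw [Ne, ZMod.natCast_eq_zero_iff]
      intro hd
      have := Nat.le_of_dvd (by omega) hd
      omega
    exact neg_ne_zero.2 (mul_ne_zero hA hI)
  have hdetN : N.det ≠ 0 := by
    intro h0
    have h1 : ((N.det : ℤ) : ZMod b) = (N.map (Int.cast : ℤ → ZMod b)).det :=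
      RingHom.map_det (Int.castRingHom (ZMod b)) N
    rw [h0, Int.cast_zero, hR, Matrix.det_smul, Matrix.det_one, mul_one] at h1
    exact pow_ne_zero _ hai h1.symm
  -- over ℚ
  set NQ : Matrix ↥F ↥F ℚ := N.map (Int.cast : ℤ → ℚ) with hNQ
  have hdetNQ : NQ.det ≠ 0 := by
    have h1 : ((N.det : ℤ) : ℚ) = NQ.det := RingHom.map_det (Int.castRingHom ℚ) N
    rw [← h1]
    exact_mod_cast hdetN
  set MQ : Matrix ↥F ↥F ℚ := ((c : ℚ)) • NQ with hMQ
  have hcQ : (c : ℚ) ≠ 0 := by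
    have : c ≠ 0 := pow_ne_zero _ (by omega)
    exact_mod_cast this
  have hdetMQ : MQ.det ≠ 0 := by
    rw [hMQ, Matrix.det_smul]
    exact mul_ne_zero (pow_ne_zero _ hcQ) hdetNQ
  have hrankMQ : MQ.rank = Fintype.card ↥F :=
    Matrix.rank_of_isUnit MQ ((Matrix.isUnit_iff_isUnit_det MQ).2 (isUnit_iff_ne_zero.2 hdetMQ))
  -- decomposition MQ = Gram + rank one
  set X : Matrix ↥F (Fin n) ℚ := Matrix.of fun A j => if j ∈ (A : Finset (Fin n)) then 1 else 0
    with hX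
  set U : Matrix ↥F Unit ℚ := Matrix.of fun _ _ => -((a : ℚ) * i * c) with hU
  set V : Matrix Unit ↥F ℚ := Matrix.of fun _ _ => 1 with hV
  have hdecomp : MQ = X * Xᵀ + U * V := by
    ext A B
    have hGram : (X * Xᵀ) A B = (((A : Finset (Fin n)) ∩ B).card : ℚ) := by
      rw [Matrix.mul_apply]
      have : ∀ j : Fin n, X A j * Xᵀ j B
          = if j ∈ (A : Finset (Fin n)) ∩ (B : Finset (Fin n)) then (1 : ℚ) else 0 := by
        intro j
        by_cases h1 : j ∈ (A : Finset (Fin n)) <;> by_cases h2 : j ∈ (B : Finset (Fin n)) <;>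
          simp [hX, Matrix.transpose_apply, Finset.mem_inter, h1, h2]
      rw [Finset.sum_congr rfl fun j _ => this j, Finset.sum_boole]
      norm_cast
      congr 1
      ext x
      simp [Finset.mem_inter]
    have hUV : (U * V) A B = -((a : ℚ) * i * c) := by
      simp [Matrix.mul_apply, hU, hV]
    rw [Matrix.add_apply, hGram, hUV]
    have := hN1 A B
    have h2 : (((((A : Finset (Fin n)) ∩ B).card : ℤ) : ℚ)
        - ((a : ℤ) : ℚ) * ((i : ℤ) : ℚ) * ((c : ℤ) : ℚ) = ((c : ℤ) : ℚ) * ((N A B : ℤ) : ℚ)) := by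
      exact_mod_cast congrArg (fun z : ℤ => (z : ℚ)) this
    rw [hMQ, Matrix.smul_apply, hNQ, Matrix.map_apply]
    rw [smul_eq_mul]
    push_cast at h2 ⊢
    linarith
  -- rank bounds
  have hrank1 : (X * Xᵀ).rank ≤ n := by
    refine le_trans (Matrix.rank_mul_le_left X Xᵀ) ?_
    simpa using Matrix.rank_le_card_width X
  have hrank2 : (U * V).rank ≤ 1 := by
    refine le_trans (Matrix.rank_mul_le_left U V) ?_
    simpa using Matrix.rank_le_card_width U
  have : Fintype.card ↥F ≤ n + 1 := by
    rw [← hrankMQ, hdecomp]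
    exact le_trans (my_rank_add_le _ _) (add_le_add hrank1 hrank2)
  simpa [Fintype.card_coe] using this
end
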